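/- arXiv:2410.16870 — 2 statements merged into one kernel-verified Lean document; each statement's English description precedes it below -/
import Mathlib

section
/- The pooled ATE asymptotic variance is at most the Meta-IVW asymptotic variance: for σ² > 0, a ≥ 0, weights w_1,...,w_K > 0 summing to 1, and p_1,...,p_K ∈ (0,1) with p = Σ_k w_k p_k, one has σ²/(p(1−p)) + a ≤ (Σ_k w_k · (σ²/(p_k(1−p_k)) + a)^{-1})^{-1}. -/
private lemma inv_form (σ2 a x : ℝ) (hσ2 : 0 < σ2) (ha : 0 ≤ a) (hx : 0 < x) :
    (σ2 / x + a)⁻¹ = x / (σ2 + a * x) := by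
  have h : σ2 / x + a = (σ2 + a * x) / x := by field_simp
  rw [h, inv_div]

private lemma tangent (σ2 a m x : ℝ) (hσ2 : 0 < σ2) (ha : 0 ≤ a) (hm : 0 < m) (hx : 0 < x) :
    x / (σ2 + a * x) ≤ m / (σ2 + a * m) + σ2 / (σ2 + a * m) ^ 2 * (x - m) := by
  have h1 : 0 < σ2 + a * x := by positivity
  have h2 : 0 < σ2 + a * m := by positivity
  have h3 : 0 < (σ2 + a * m) ^ 2 := by positivity
  have hrhs : m / (σ2 + a * m) + σ2 / (σ2 + a * m) ^ 2 * (x - m)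
      = (m * (σ2 + a * m) + σ2 * (x - m)) / (σ2 + a * m) ^ 2 := by
    field_simp
  rw [hrhs, div_le_div_iff₀ h1 h3]
  nlinarith [mul_nonneg (mul_nonneg hσ2.le ha) (sq_nonneg (x - m))]

private lemma fmono (σ2 a x y : ℝ) (hσ2 : 0 < σ2) (ha : 0 ≤ a) (hx : 0 < x) (hxy : x ≤ y) :
    x / (σ2 + a * x) ≤ y / (σ2 + a * y) := by
  have hy : 0 < y := lt_of_lt_of_le hx hxy
  have h1 : 0 < σ2 + a * x := by positivity
  have h2 : 0 < σ2 + a * y := by positivity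
  rw [div_le_div_iff₀ h1 h2]
  nlinarith

/-- The pooled ATE asymptotic variance is at most the Meta-IVW asymptotic variance. -/
theorem pool_avar_le_meta_ivw_avar (K : ℕ) (σ2 a : ℝ) (hσ2 : 0 < σ2) (ha : 0 ≤ a)
    (w p : Fin K → ℝ) (hw : ∀ k, 0 < w k) (hsum : (∑ k, w k) = 1)
    (hp : ∀ k, p k ∈ Set.Ioo (0 : ℝ) 1) :
    σ2 / ((∑ k, w k * p k) * (1 - ∑ k, w k * p k)) + a ≤
      (∑ k, w k * (σ2 / (p k * (1 - p k)) + a)⁻¹)⁻¹ := by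
  have hK : Nonempty (Fin K) := by
    rcases Nat.eq_zero_or_pos K with h | h
    · subst h; simp at hsum
    · exact ⟨⟨0, h⟩⟩
  have hne : (Finset.univ : Finset (Fin K)).Nonempty := Finset.univ_nonempty
  set pb := ∑ k, w k * p k with hpb
  have hx : ∀ k, 0 < p k * (1 - p k) := fun k =>
    mul_pos (hp k).1 (by linarith [(hp k).2])
  have hpb0 : 0 < pb := Finset.sum_pos (fun k _ => mul_pos (hw k) (hp k).1) hne
  have hpb1 : pb < 1 := by
    have h := Finset.sum_lt_sum_of_nonempty hne
      (f := fun k => w k * p k) (g := w)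
      (fun k _ => mul_lt_of_lt_one_right (hw k) (hp k).2)
    rw [hsum] at h; exact h
  set xb := pb * (1 - pb) with hxb
  have hxb0 : 0 < xb := mul_pos hpb0 (by linarith)
  set m := ∑ k, w k * (p k * (1 - p k)) with hm
  have hm0 : 0 < m := Finset.sum_pos (fun k _ => mul_pos (hw k) (hx k)) hne
  -- m ≤ xb
  have hsq : 0 ≤ ∑ k, w k * (p k - pb) ^ 2 :=
    Finset.sum_nonneg (fun k _ => mul_nonneg (hw k).le (sq_nonneg _))
  have e1 : ∑ k, w k * (p k - pb) ^ 2 = (∑ k, w k * p k ^ 2) - pb ^ 2 := by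
    have h : ∀ k : Fin K, w k * (p k - pb) ^ 2
        = w k * p k ^ 2 - 2 * pb * (w k * p k) + pb ^ 2 * w k := fun k => by ring
    simp_rw [h, Finset.sum_add_distrib, Finset.sum_sub_distrib, ← Finset.mul_sum,
      ← hpb, hsum]
    ring
  have e2 : m = pb - ∑ k, w k * p k ^ 2 := by
    have h : ∀ k : Fin K, w k * (p k * (1 - p k)) = w k * p k - w k * p k ^ 2 :=
      fun k => by ring
    simp_rw [hm, h, Finset.sum_sub_distrib, ← hpb]
  have hmxb : m ≤ xb := by nlinarith [e1 ▸ hsq]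
  -- rewrite summands
  have hrw : ∀ k : Fin K, (σ2 / (p k * (1 - p k)) + a)⁻¹
      = (p k * (1 - p k)) / (σ2 + a * (p k * (1 - p k))) :=
    fun k => inv_form σ2 a _ hσ2 ha (hx k)
  set S := ∑ k, w k * ((p k * (1 - p k)) / (σ2 + a * (p k * (1 - p k)))) with hS
  have hS0 : 0 < S := Finset.sum_pos (fun k _ => mul_pos (hw k)
    (div_pos (hx k) (add_pos_of_pos_of_nonneg hσ2 (mul_nonneg ha (hx k).le)))) hne
  -- Jensen step
  have hSm : S ≤ m / (σ2 + a * m) := by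
    have step : ∀ k ∈ (Finset.univ : Finset (Fin K)),
        w k * ((p k * (1 - p k)) / (σ2 + a * (p k * (1 - p k))))
        ≤ w k * (m / (σ2 + a * m) + σ2 / (σ2 + a * m) ^ 2 * (p k * (1 - p k) - m)) :=
      fun k _ => mul_le_mul_of_nonneg_left
        (tangent σ2 a m _ hσ2 ha hm0 (hx k)) (hw k).le
    calc S ≤ ∑ k, w k * (m / (σ2 + a * m) + σ2 / (σ2 + a * m) ^ 2 * (p k * (1 - p k) - m)) :=
        Finset.sum_le_sum step
      _ = m / (σ2 + a * m) := by
        have h : ∀ k : Fin K,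
            w k * (m / (σ2 + a * m) + σ2 / (σ2 + a * m) ^ 2 * (p k * (1 - p k) - m))
            = m / (σ2 + a * m) * w k
              + σ2 / (σ2 + a * m) ^ 2 * (w k * (p k * (1 - p k))) 
              - σ2 / (σ2 + a * m) ^ 2 * m * w k := fun k => by ring
        simp_rw [h, Finset.sum_sub_distrib, Finset.sum_add_distrib, ← Finset.mul_sum,
          ← hm, hsum]
        ring
  have hSF : S ≤ xb / (σ2 + a * xb) :=
    hSm.trans (fmono σ2 a m xb hσ2 ha hm0 hmxb)
  have hfinal : (xb / (σ2 + a * xb))⁻¹ ≤ S⁻¹ :=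
    inv_anti₀ hS0 hSF
  have hFinv : (xb / (σ2 + a * xb))⁻¹ = σ2 / xb + a := by
    rw [← inv_form σ2 a xb hσ2 ha hxb0, inv_inv]
  simp_rw [hrw, ← hS]
  rw [← hFinv]
  exact hfinal
end

section
/- Variance reduction of pooled over one-shot SW intercepts: for symmetric positive definite Σ_k, vectors μ_k, and weights w_k > 0 summing to 1, one has (Σ_k w_k μ_k)^T (Σ_k w_k Σ_k)^{-1} (Σ_k w_k μ_k) − Σ_k w_k² μ_k^T Σ_k^{-1} μ_k ≤ Σ_k w_k (1 − w_k) μ_k^T Σ_k^{-1} μ_k, and in particular the left-hand side is at most Σ_k w_k(1−w_k) μ_k^T Σ_k^{-1} μ_k where each summand is nonnegative. -/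
open Matrix Finset

lemma sum_mulVec' {ι d : ℕ} (A : Fin ι → Matrix (Fin d) (Fin d) ℝ) (x : Fin d → ℝ) :
    (∑ i, A i) *ᵥ x = ∑ i, A i *ᵥ x := by
  ext j
  simp [Matrix.mulVec, dotProduct, Matrix.sum_apply, Finset.sum_mul]
  rw [Finset.sum_comm]

lemma dotProduct_sum' {ι d : ℕ} (x : Fin d → ℝ) (v : Fin ι → Fin d → ℝ) :
    x ⬝ᵥ (∑ i, v i) = ∑ i, x ⬝ᵥ v i := by
  simp [dotProduct, Finset.sum_apply, Finset.mul_sum]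
  rw [Finset.sum_comm]

lemma sum_dotProduct' {ι d : ℕ} (x : Fin d → ℝ) (v : Fin ι → Fin d → ℝ) :
    (∑ i, v i) ⬝ᵥ x = ∑ i, v i ⬝ᵥ x := by
  rw [dotProduct_comm, dotProduct_sum']
  simp [dotProduct_comm]

lemma key_ineq {d : ℕ} (S : Matrix (Fin d) (Fin d) ℝ) (hS : S.PosDef)
    (μ v : Fin d → ℝ) :
    2 * (μ ⬝ᵥ v) ≤ μ ⬝ᵥ (S⁻¹ *ᵥ μ) + v ⬝ᵥ (S *ᵥ v) := by
  have hdet : IsUnit S.det := isUnit_iff_ne_zero.mpr hS.det_pos.ne'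
  have hSym : Sᵀ = S := by
    have := hS.isHermitian
    simpa [Matrix.IsHermitian, Matrix.conjTranspose_eq_transpose_of_trivial] using this
  have hinv := hS.inv.posSemidef
  have h0 := hinv.dotProduct_mulVec_nonneg (μ - S *ᵥ v)
  rw [star_trivial] at h0
  have hSv : S⁻¹ *ᵥ (S *ᵥ v) = v := by
    rw [Matrix.mulVec_mulVec, Matrix.nonsing_inv_mul _ hdet, Matrix.one_mulVec]
  have hcross : (S *ᵥ v) ⬝ᵥ (S⁻¹ *ᵥ μ) = μ ⬝ᵥ v := by
    rw [dotProduct_comm, Matrix.dotProduct_mulVec, ← Matrix.mulVec_transpose, hSym,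
      Matrix.mulVec_mulVec, Matrix.mul_nonsing_inv _ hdet, Matrix.one_mulVec,
      dotProduct_comm]
  have hexp : (μ - S *ᵥ v) ⬝ᵥ (S⁻¹ *ᵥ (μ - S *ᵥ v)) =
      μ ⬝ᵥ (S⁻¹ *ᵥ μ) - 2 * (μ ⬝ᵥ v) + v ⬝ᵥ (S *ᵥ v) := by
    rw [Matrix.mulVec_sub, hSv, sub_dotProduct, dotProduct_sub,
      dotProduct_sub, hcross, dotProduct_comm (S *ᵥ v) v]
    ring
  rw [hexp] at h0
  linarith

/-- Variance reduction of pooled over one-shot SW intercepts: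
`(∑ w μ)ᵀ (∑ w Σ)⁻¹ (∑ w μ) − ∑ w² μᵀ Σ⁻¹ μ ≤ ∑ w(1−w) μᵀ Σ⁻¹ μ`,
where each summand on the right is nonnegative. -/
theorem pooled_vs_oneshot_intercepts (K d : ℕ)
    (S : Fin K → Matrix (Fin d) (Fin d) ℝ) (hS : ∀ k, (S k).PosDef)
    (μ : Fin K → Fin d → ℝ) (w : Fin K → ℝ)
    (hw : ∀ k, 0 < w k) (hsum : (∑ k, w k) = 1) :
    ((∑ k, w k • μ k) ⬝ᵥ ((∑ k, w k • S k)⁻¹ *ᵥ (∑ k, w k • μ k)) -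
        ∑ k, (w k)^2 * (μ k ⬝ᵥ ((S k)⁻¹ *ᵥ μ k)) ≤
      ∑ k, w k * (1 - w k) * (μ k ⬝ᵥ ((S k)⁻¹ *ᵥ μ k))) ∧
    (∀ k, 0 ≤ w k * (1 - w k) * (μ k ⬝ᵥ ((S k)⁻¹ *ᵥ μ k))) := by
  have hq0 : ∀ k, 0 ≤ μ k ⬝ᵥ ((S k)⁻¹ *ᵥ μ k) := fun k => by
    simpa using (hS k).inv.posSemidef.dotProduct_mulVec_nonneg (μ k)
  have hw1 : ∀ k, w k ≤ 1 := fun k =>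
    hsum ▸ Finset.single_le_sum (fun j _ => (hw j).le) (Finset.mem_univ k)
  refine ⟨?_, fun k => mul_nonneg (mul_nonneg (hw k).le (by linarith [hw1 k])) (hq0 k)⟩
  have hK : Nonempty (Fin K) := by
    rcases Nat.eq_zero_or_pos K with h | h
    · subst h; simp at hsum
    · exact ⟨⟨0, h⟩⟩
  set T : Matrix (Fin d) (Fin d) ℝ := ∑ k, w k • S k with hT
  set x : Fin d → ℝ := ∑ k, w k • μ k with hx
  have hTpd : T.PosDef := by
    refine Matrix.PosDef.of_dotProduct_mulVec_pos ?_ ?_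
    · show Tᴴ = T
      rw [hT, Matrix.conjTranspose_sum]
      exact Finset.sum_congr rfl fun k _ => by
        rw [Matrix.conjTranspose_smul, star_trivial, (hS k).1.eq]
    · intro y hy
      rw [star_trivial]
      have hexp : y ⬝ᵥ (T *ᵥ y) = ∑ k, w k * (y ⬝ᵥ (S k *ᵥ y)) := by
        rw [hT, sum_mulVec', dotProduct_sum']
        exact Finset.sum_congr rfl fun k _ => by
          rw [Matrix.smul_mulVec, dotProduct_smul, smul_eq_mul]
      rw [hexp]
      refine Finset.sum_pos (fun k _ => mul_pos (hw k) ?_) Finset.univ_nonempty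
      simpa using (hS k).dotProduct_mulVec_pos hy
  have hdet : IsUnit T.det := isUnit_iff_ne_zero.mpr hTpd.det_pos.ne'
  set v : Fin d → ℝ := T⁻¹ *ᵥ x with hv
  have hTv : T *ᵥ v = x := by
    rw [hv, Matrix.mulVec_mulVec, Matrix.mul_nonsing_inv _ hdet, Matrix.one_mulVec]
  have hxv : x ⬝ᵥ v = ∑ k, w k * (μ k ⬝ᵥ v) := by
    rw [hx, sum_dotProduct']
    exact Finset.sum_congr rfl fun k _ => by
      rw [smul_dotProduct, smul_eq_mul]
  have hvTv : v ⬝ᵥ (T *ᵥ v) = ∑ k, w k * (v ⬝ᵥ (S k *ᵥ v)) := by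
    rw [hT, sum_mulVec', dotProduct_sum']
    exact Finset.sum_congr rfl fun k _ => by
      rw [Matrix.smul_mulVec, dotProduct_smul, smul_eq_mul]
  have hvx : v ⬝ᵥ (T *ᵥ v) = x ⬝ᵥ v := by rw [hTv, dotProduct_comm]
  have hkey : ∀ k, w k * (2 * (μ k ⬝ᵥ v)) ≤
      w k * (μ k ⬝ᵥ ((S k)⁻¹ *ᵥ μ k) + v ⬝ᵥ (S k *ᵥ v)) := fun k =>
    mul_le_mul_of_nonneg_left (key_ineq (S k) (hS k) (μ k) v) (hw k).le
  have hsumkey := Finset.sum_le_sum (s := Finset.univ) (fun k _ => hkey k)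
  have hL : ∑ k, w k * (2 * (μ k ⬝ᵥ v)) = 2 * (x ⬝ᵥ v) := by
    rw [hxv, Finset.mul_sum]
    exact Finset.sum_congr rfl fun k _ => by ring
  have hR : ∑ k, w k * (μ k ⬝ᵥ ((S k)⁻¹ *ᵥ μ k) + v ⬝ᵥ (S k *ᵥ v)) =
      (∑ k, w k * (μ k ⬝ᵥ ((S k)⁻¹ *ᵥ μ k))) + x ⬝ᵥ v := by
    rw [← hvx, hvTv, ← Finset.sum_add_distrib]
    exact Finset.sum_congr rfl fun k _ => by ring
  rw [hL, hR] at hsumkey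
  have hmain : x ⬝ᵥ v ≤ ∑ k, w k * (μ k ⬝ᵥ ((S k)⁻¹ *ᵥ μ k)) := by linarith
  have hsplit : (∑ k, w k * (1 - w k) * (μ k ⬝ᵥ ((S k)⁻¹ *ᵥ μ k))) =
      (∑ k, w k * (μ k ⬝ᵥ ((S k)⁻¹ *ᵥ μ k))) -
      ∑ k, (w k)^2 * (μ k ⬝ᵥ ((S k)⁻¹ *ᵥ μ k)) := by
    rw [← Finset.sum_sub_distrib]
    exact Finset.sum_congr rfl fun k _ => by ring
  rw [hsplit]
  linarith
end
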